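/- arXiv:1302.0116 — 5 statements merged into one kernel-verified Lean document; each statement's English description precedes it below -/
import Mathlib

section
/- Let K be a field of characteristic zero, R = K[X_1,...,X_n], and I an ideal of R with ∂_n(I) ⊆ I (where ∂_n = ∂/∂X_n). Then for any ξ ∈ I, writing ξ = Σ_{j=0}^m c_j X_n^j with c_j ∈ K[X_1,...,X_{n-1}], each coefficient c_j lies in I. -/
/-!
If `p ∈ I` has degree `d`, then `∂^d p = C (d! • leadingCoeff p)` lies in `I`, and since `d!` is
invertible over `ℚ` the constant `C (leadingCoeff p)` lies in `I`. Removing the leading term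
keeps us inside `I` and lowers the degree, so induction on the degree gives every coefficient.
-/

open Nat

namespace Polynomial

theorem iterate_derivative_natDegree_self {R : Type*} [Semiring R] (p : R[X]) :
    derivative^[p.natDegree] p = C (p.natDegree ! * p.leadingCoeff) := by
  have hdeg : (derivative^[p.natDegree] p).natDegree ≤ 0 := by
    simpa using natDegree_iterate_derivative p p.natDegree
  rw [eq_C_of_natDegree_le_zero hdeg, coeff_iterate_derivative, zero_add,
    descFactorial_self, nsmul_eq_mul, leadingCoeff]

variable {R : Type*} [CommRing R] {I : Ideal R[X]} (hI : ∀ p ∈ I, derivative p ∈ I)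
include hI

theorem iterate_derivative_mem {p : R[X]} (hp : p ∈ I) (k : ℕ) : derivative^[k] p ∈ I := by
  induction k with
  | zero => exact hp
  | succ k ih => rw [Function.iterate_succ_apply']; exact hI _ ih

variable [Algebra ℚ R]

theorem C_leadingCoeff_mem_of_derivative_mem {p : R[X]} (hp : p ∈ I) :
    C p.leadingCoeff ∈ I := by
  have h := iterate_derivative_mem hI hp p.natDegree
  rw [iterate_derivative_natDegree_self, C_mul, mul_comm] at h
  exact (I.mul_unit_mem_iff_mem ((IsUnit.natCast_factorial_of_algebra ℚ _).map C)).mp h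

theorem C_coeff_mem_of_derivative_mem {p : R[X]} (hp : p ∈ I) (j : ℕ) : C (p.coeff j) ∈ I := by
  have hlead := C_leadingCoeff_mem_of_derivative_mem hI hp
  obtain rfl | hj := eq_or_ne j p.natDegree
  · exact hlead
  have herase : p.eraseLead ∈ I := by
    rw [← self_sub_C_mul_X_pow]
    exact I.sub_mem hp (I.mul_mem_right _ hlead)
  rw [← eraseLead_coeff_of_ne j hj]
  obtain hlt | hzero := eraseLead_natDegree_lt_or_eraseLead_eq_zero p
  · exact C_coeff_mem_of_derivative_mem herase j
  · simp [hzero]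
termination_by p.natDegree

end Polynomial

/-- If an ideal `I` of `R = K[X_1,...,X_{n-1}][X_n]` is stable under `∂_n`, then the
coefficients (in `K[X_1,...,X_{n-1}]`) of any `ξ ∈ I`, as a polynomial in `X_n`, lie in `I`. -/
theorem stmt2 (K : Type*) [Field K] [CharZero K] (m : ℕ)
    (I : Ideal (Polynomial (MvPolynomial (Fin m) K)))
    (hI : ∀ ξ ∈ I, Polynomial.derivative ξ ∈ I)
    (ξ : Polynomial (MvPolynomial (Fin m) K)) (hξ : ξ ∈ I) (j : ℕ) :
    Polynomial.C (ξ.coeff j) ∈ I :=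
  Polynomial.C_coeff_mem_of_derivative_mem hI hξ j
end

section
/- Let K be a field of characteristic zero, R = K[X_1,...,X_n], and I an ideal of R. Set J = I ∩ K[X_1,...,X_{n-1}]. Then ∂_n(I) ⊆ I if and only if I = J·R (I is extended from K[X_1,...,X_{n-1}]). -/
/-!
If `I ⊆ R[X]` is stable under `d/dX`, then it is also stable under `d^k/dX^k` with `k = deg p`, which sends
`p ∈ I` to the constant `k! · lc(p)`; over a `ℚ`-algebra this puts `lc(p)` in `I ∩ R`, and
subtracting the leading term lowers the degree. Conversely, the coefficients of `p'` are integer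
multiples of those of `p`, so every extended ideal `J·R[X]` is stable under `d/dX`.
-/

open Polynomial

namespace Polynomial

variable {R : Type*} [CommRing R]

theorem iterate_derivative_natDegree (p : R[X]) :
    derivative^[p.natDegree] p = C (p.natDegree.factorial • p.leadingCoeff) := by
  have hdeg : (derivative^[p.natDegree] p).natDegree = 0 := by
    have := p.natDegree_iterate_derivative p.natDegree
    omega
  rw [eq_C_of_natDegree_eq_zero hdeg, coeff_iterate_derivative, zero_add,
    Nat.descFactorial_self, leadingCoeff]

theorem derivative_mem_map_C {J : Ideal R} {p : R[X]} (hp : p ∈ J.map C) :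
    derivative p ∈ J.map C :=
  Ideal.mem_map_C_iff.2 fun n => by
    rw [coeff_derivative]
    exact J.mul_mem_right _ (Ideal.mem_map_C_iff.1 hp _)

variable [Algebra ℚ R] {I : Ideal R[X]}

theorem C_leadingCoeff_mem_of_mapsTo_derivative (hI : Set.MapsTo derivative (I : Set R[X]) I) {p : R[X]}
    (hp : p ∈ I) : C p.leadingCoeff ∈ I := by
  have hfac : C (p.natDegree.factorial • p.leadingCoeff) ∈ I := by
    rw [← iterate_derivative_natDegree]
    exact hI.iterate _ hp
  have hk : (p.natDegree.factorial : ℚ) ≠ 0 := by exact_mod_cast p.natDegree.factorial_ne_zero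
  rw [← smul_C, ← Nat.cast_smul_eq_nsmul ℚ] at hfac
  simpa [smul_smul, hk] using I.smul_of_tower_mem (p.natDegree.factorial : ℚ)⁻¹ hfac

theorem mem_map_C_comap_C_of_mapsTo_derivative (hI : Set.MapsTo derivative (I : Set R[X]) I) {p : R[X]}
    (hp : p ∈ I) : p ∈ (I.comap C).map C := by
  induction hn : p.natDegree using Nat.strong_induction_on generalizing p with
  | _ n ih =>
  have hlc : C p.leadingCoeff ∈ I := C_leadingCoeff_mem_of_mapsTo_derivative hI hp
  have hrest : p.eraseLead ∈ (I.comap C).map C := by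
    obtain hlt | h0 := p.eraseLead_natDegree_lt_or_eraseLead_eq_zero
    · refine ih _ (hn ▸ hlt) ?_ rfl
      rw [← self_sub_C_mul_X_pow]
      exact I.sub_mem hp (I.mul_mem_right _ hlc)
    · simp [h0]
  rw [← p.eraseLead_add_C_mul_X_pow]
  exact add_mem hrest (Ideal.mul_mem_right _ _ (Ideal.mem_map_of_mem _ hlc))

theorem mapsTo_derivative_iff_eq_map_C_comap_C :
    Set.MapsTo derivative (I : Set R[X]) I ↔ I = (I.comap C).map C := by
  refine ⟨fun hI => le_antisymm (fun p hp => ?_) Ideal.map_comap_le, fun h => ?_⟩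
  · exact mem_map_C_comap_C_of_mapsTo_derivative hI hp
  · rw [h]
    exact fun p hp => derivative_mem_map_C hp

end Polynomial

/-- For an ideal `I` of `R = K[X_1,...,X_{n-1}][X_n]`, with `J = I ∩ K[X_1,...,X_{n-1}]`,
one has `∂_n(I) ⊆ I` iff `I = J·R`. -/
theorem stmt3 (K : Type*) [Field K] [CharZero K] (m : ℕ)
    (I : Ideal (Polynomial (MvPolynomial (Fin m) K))) :
    (∀ ξ ∈ I, Polynomial.derivative ξ ∈ I) ↔
      I = Ideal.map (Polynomial.C : MvPolynomial (Fin m) K →+* Polynomial (MvPolynomial (Fin m) K))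
        (I.comap (Polynomial.C : MvPolynomial (Fin m) K →+* Polynomial (MvPolynomial (Fin m) K))) :=
  mapsTo_derivative_iff_eq_map_C_comap_C
end

section
/- Let K be a field of characteristic zero, R = K[X_1,...,X_n], P a prime ideal of R, and I an ideal with radical √I = P. If ∂_n(I) ⊆ I, then P = (P ∩ K[X_1,...,X_{n-1}])·R. -/
/-!
In characteristic zero the radical of an ideal stable under a derivation `D` is again stable:
for `g = f ^ (a + 1) * D f ^ c ∈ I` one has
`(a + 1) • f ^ a * D f ^ (c + 2) = D (D f * g) - (c + 1) • D (D f) * g ∈ I`,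
so `f ^ n ∈ I` forces `D f ^ (2 * n) ∈ I`. Hence `P = √I` is stable under `∂/∂X`.
A `∂/∂X`-stable ideal of `R[X]` over a `ℚ`-algebra contains the leading coefficient of each
of its elements (apply `∂^[deg f]` and divide by `(deg f)!`), and stripping off leading terms
shows that it is generated by its constants.
-/

open Polynomial

theorem Ideal.natCast_mul_mem_iff {A : Type*} [CommRing A] [Algebra ℚ A] (I : Ideal A)
    {n : ℕ} (hn : n ≠ 0) {x : A} : (n : A) * x ∈ I ↔ x ∈ I := by
  refine I.unit_mul_mem_iff_mem ?_
  simpa using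
    (isUnit_iff_ne_zero.mpr (Nat.cast_ne_zero.mpr hn : (n : ℚ) ≠ 0)).map (algebraMap ℚ A)

namespace Derivation

variable {R A : Type*} [CommRing R] [CommRing A] [Algebra R A] [Algebra ℚ A]
  (D : Derivation R A A) {I : Ideal A}

theorem pow_mul_pow_mem_of_succ_pow_mul_pow_mem (hI : ∀ a ∈ I, D a ∈ I) {f : A} {a c : ℕ}
    (h : f ^ (a + 1) * D f ^ c ∈ I) : f ^ a * D f ^ (c + 2) ∈ I := by
  have h' : f ^ (a + 1) * D f ^ (c + 1) ∈ I := by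
    convert I.mul_mem_left (D f) h using 1; ring
  have key : D (f ^ (a + 1) * D f ^ (c + 1)) - (c + 1 : ℕ) * D (D f) * (f ^ (a + 1) * D f ^ c)
      = (a + 1 : ℕ) * (f ^ a * D f ^ (c + 2)) := by
    simp only [leibniz, leibniz_pow, smul_eq_mul, nsmul_eq_mul, Nat.add_sub_cancel]
    ring
  rw [← I.natCast_mul_mem_iff a.succ_ne_zero, ← key]
  exact sub_mem (hI _ h') (I.mul_mem_left _ h)

theorem pow_mem_of_pow_mul_pow_mem (hI : ∀ a ∈ I, D a ∈ I) {f : A} {a c : ℕ}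
    (h : f ^ a * D f ^ c ∈ I) : D f ^ (c + 2 * a) ∈ I := by
  induction a generalizing c with
  | zero => simpa using h
  | succ a ih =>
    rw [show c + 2 * (a + 1) = c + 2 + 2 * a by ring]
    exact ih (D.pow_mul_pow_mem_of_succ_pow_mul_pow_mem hI h)

theorem apply_mem_radical (hI : ∀ a ∈ I, D a ∈ I) {f : A} (hf : f ∈ I.radical) :
    D f ∈ I.radical := by
  obtain ⟨n, hn⟩ := hf
  exact ⟨0 + 2 * n, D.pow_mem_of_pow_mul_pow_mem hI (c := 0) (by simpa using hn)⟩

end Derivation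

namespace Polynomial

variable {R : Type*} [CommRing R] [Algebra ℚ R] {P : Ideal R[X]}

theorem C_leadingCoeff_mem_of_derivative_mem_s4 (hP : ∀ f ∈ P, derivative f ∈ P) {f : R[X]}
    (hf : f ∈ P) : C f.leadingCoeff ∈ P := by
  set d := f.natDegree
  have hconst : derivative^[d] f = (d.factorial : R[X]) * C f.leadingCoeff := by
    rw [eq_C_of_natDegree_le_zero ((natDegree_iterate_derivative f d).trans (Nat.sub_self d).le),
      coeff_iterate_derivative, zero_add, Nat.descFactorial_self, map_nsmul, nsmul_eq_mul]
    rfl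
  rw [← P.natCast_mul_mem_iff d.factorial_ne_zero, ← hconst]
  exact Set.MapsTo.iterate (fun g hg ↦ hP g hg) d hf

theorem mem_map_C_comap_C_of_derivative_mem (hP : ∀ f ∈ P, derivative f ∈ P) {f : R[X]}
    (hf : f ∈ P) : f ∈ (P.comap C).map C := by
  induction hd : f.natDegree using Nat.strong_induction_on generalizing f with
  | _ d ih =>
  have hlead : C f.leadingCoeff * X ^ f.natDegree ∈ (P.comap C).map C :=
    Ideal.mul_mem_right _ _ (Ideal.mem_map_of_mem _ (C_leadingCoeff_mem_of_derivative_mem_s4 hP hf))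
  have herase : f.eraseLead ∈ (P.comap C).map C := by
    rcases f.eraseLead_natDegree_lt_or_eraseLead_eq_zero with hlt | hzero
    · refine ih _ (hd ▸ hlt) ?_ rfl
      rw [← self_sub_C_mul_X_pow]
      exact sub_mem hf (P.mul_mem_right _ (C_leadingCoeff_mem_of_derivative_mem_s4 hP hf))
    · rw [hzero]; exact zero_mem _
  rw [← f.eraseLead_add_C_mul_X_pow]
  exact add_mem herase hlead

theorem eq_map_C_comap_C_of_derivative_mem (hP : ∀ f ∈ P, derivative f ∈ P) :
    P = (P.comap C).map C :=
  le_antisymm (fun _ hf ↦ mem_map_C_comap_C_of_derivative_mem hP hf) Ideal.map_comap_le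

end Polynomial

theorem stmt4_general (K : Type*) [Field K] [CharZero K] (m : ℕ)
    (P I : Ideal (Polynomial (MvPolynomial (Fin m) K)))
    (hrad : I.radical = P)
    (hI : ∀ ξ ∈ I, Polynomial.derivative ξ ∈ I) :
    P = Ideal.map (Polynomial.C : MvPolynomial (Fin m) K →+* Polynomial (MvPolynomial (Fin m) K))
      (P.comap (Polynomial.C : MvPolynomial (Fin m) K →+* Polynomial (MvPolynomial (Fin m) K))) := by
  subst hrad
  exact eq_map_C_comap_C_of_derivative_mem fun f ↦ derivative'.apply_mem_radical hI

/-- If `P` is prime, `√I = P` and `∂_n(I) ⊆ I`, then `P` is extended from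
`K[X_1,...,X_{n-1}]`, i.e. `P = (P ∩ K[X_1,...,X_{n-1}])·R`. -/
theorem stmt4 (K : Type*) [Field K] [CharZero K] (m : ℕ)
    (P I : Ideal (Polynomial (MvPolynomial (Fin m) K)))
    (hP : P.IsPrime) (hrad : I.radical = P)
    (hI : ∀ ξ ∈ I, Polynomial.derivative ξ ∈ I) :
    P = Ideal.map (Polynomial.C : MvPolynomial (Fin m) K →+* Polynomial (MvPolynomial (Fin m) K))
      (P.comap (Polynomial.C : MvPolynomial (Fin m) K →+* Polynomial (MvPolynomial (Fin m) K))) :=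
  stmt4_general K m P I hrad hI
end

section
/- Let K be a field of characteristic zero and O_n = K[[X_1,...,X_n]]. Let I be an ideal of O_n with ∂_n(I) ⊆ I, where ∂_n = ∂/∂X_n. If ξ = Σ_{j≥0} c_j X_n^j ∈ I with each c_j ∈ K[[X_1,...,X_{n-1}]], then every coefficient c_j lies in I. -/
/-!
Since `I` is stable under `D = d/dX`, it contains every `X ^ k * D^[k] f`, hence the truncated
Taylor sums `∑_{k<N} (-X)^k / k! • D^[k] f`, which are the expansions of `f (X + h)` at `h = -X`
and so agree with `f(0)` modulo `X ^ N`. Thus `f(0) ∈ I ⊔ (X) ^ N` for every `N`; as `X` lies in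
the Jacobson radical of the Noetherian ring `R⟦X⟧`, Krull's intersection theorem applied to
`R⟦X⟧ ⧸ I` gives `f(0) ∈ I`. Applied to `D^[j] f`, whose constant term is `j! * coeff j f`,
this yields every coefficient.
-/

open Finset Nat

theorem Ideal.mem_of_forall_mem_sup_pow {R : Type*} [CommRing R] [IsNoetherianRing R]
    {I J : Ideal R} (hJ : J ≤ Ideal.jacobson ⊥) {x : R} (hx : ∀ n, x ∈ I ⊔ J ^ n) : x ∈ I := by
  rw [← Ideal.Quotient.eq_zero_iff_mem, ← Ideal.Quotient.mk_eq_mk]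
  refine (IsHausdorff.of_le_jacobson J (R ⧸ I) hJ).haus _ fun n => SModEq.zero.2 ?_
  -- `simp` reads `mk x ∈ J ^ n • ⊤` in the module `R ⧸ I` as `x ∈ J ^ n ⊔ I`
  simpa [sup_comm] using hx n

theorem sum_range_neg_one_pow_mul_descFactorial_div_factorial {n N : ℕ} (hn : n < N) :
    ∑ k ∈ range N, ((-1) ^ k / k ! * n.descFactorial k : ℚ) = if n = 0 then 1 else 0 := by
  have hchoose : ∀ k, ((-1) ^ k / k ! * n.descFactorial k : ℚ) = (-1) ^ k * n.choose k := by
    intro k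
    rw [Nat.descFactorial_eq_factorial_mul_choose, Nat.cast_mul]
    field_simp
  simp_rw [hchoose]
  rw [← Finset.sum_subset (range_subset_range.2 hn) fun k _ hk => by
    rw [Nat.choose_eq_zero_of_lt (by simpa using hk), Nat.cast_zero, mul_zero]]
  exact_mod_cast Int.alternating_sum_range_choose

namespace PowerSeries

variable {R : Type*}

theorem span_X_le_jacobson_bot [CommRing R] :
    Ideal.span {X} ≤ Ideal.jacobson (⊥ : Ideal R⟦X⟧) := by
  rw [Ideal.span_le, Set.singleton_subset_iff, SetLike.mem_coe, Ideal.mem_jacobson_bot]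
  exact fun y => isUnit_iff_constantCoeff.2 (by simp)

theorem coeff_X_pow_mul_iterate_derivative [CommSemiring R] (f : R⟦X⟧) (n k : ℕ) :
    coeff n (X ^ k * (d⁄dX R)^[k] f) = n.descFactorial k * coeff n f := by
  rw [coeff_X_pow_mul']
  split_ifs with h
  · rw [coeff_iterate_derivative, Nat.sub_add_cancel h, ← Nat.add_descFactorial_eq_ascFactorial,
      Nat.sub_add_cancel h]
  · rw [Nat.descFactorial_eq_zero_iff_lt.2 (by omega), Nat.cast_zero, zero_mul]

section

variable [CommRing R] [Algebra ℚ R]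

theorem X_pow_dvd_C_constantCoeff_sub_sum (f : R⟦X⟧) (N : ℕ) :
    X ^ N ∣ C (constantCoeff f) -
      ∑ k ∈ range N, ((-1) ^ k / k ! : ℚ) • (X ^ k * (d⁄dX R)^[k] f) := by
  rw [X_pow_dvd_iff]
  intro n hn
  have hterm : ∀ k, coeff n (((-1) ^ k / k ! : ℚ) • (X ^ k * (d⁄dX R)^[k] f)) =
      ((-1) ^ k / k ! * n.descFactorial k : ℚ) • coeff n f := by
    intro k
    rw [coeff_smul, coeff_X_pow_mul_iterate_derivative, mul_smul, Nat.cast_smul_eq_nsmul,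
      nsmul_eq_mul]
  rw [map_sub, map_sum, Finset.sum_congr rfl fun k _ => hterm k, ← Finset.sum_smul,
    sum_range_neg_one_pow_mul_descFactorial_div_factorial hn, coeff_C]
  split_ifs with h
  · rw [h, one_smul, coeff_zero_eq_constantCoeff_apply, sub_self]
  · rw [zero_smul, sub_zero]

variable [IsNoetherianRing R] {I : Ideal R⟦X⟧}

theorem C_constantCoeff_mem_of_derivative_mem (hI : ∀ f ∈ I, d⁄dX R f ∈ I) {f : R⟦X⟧}
    (hf : f ∈ I) : C (constantCoeff f) ∈ I := by
  refine Ideal.mem_of_forall_mem_sup_pow span_X_le_jacobson_bot fun N => ?_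
  have hsum : ∑ k ∈ range N, ((-1) ^ k / k ! : ℚ) • (X ^ k * (d⁄dX R)^[k] f) ∈ I :=
    Ideal.sum_mem _ fun k _ =>
      Submodule.smul_of_tower_mem _ _ (I.mul_mem_left _ (Set.MapsTo.iterate hI k hf))
  have hrem : C (constantCoeff f) - ∑ k ∈ range N, ((-1) ^ k / k ! : ℚ) • (X ^ k * (d⁄dX R)^[k] f)
      ∈ Ideal.span {X} ^ N := by
    rw [Ideal.span_singleton_pow, Ideal.mem_span_singleton]
    exact X_pow_dvd_C_constantCoeff_sub_sum f N
  exact Submodule.mem_sup.2 ⟨_, hsum, _, hrem, add_sub_cancel _ _⟩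

theorem C_coeff_mem_of_derivative_mem (hI : ∀ f ∈ I, d⁄dX R f ∈ I) {f : R⟦X⟧} (hf : f ∈ I)
    (j : ℕ) : C (coeff j f) ∈ I := by
  have h := C_constantCoeff_mem_of_derivative_mem hI (Set.MapsTo.iterate hI j hf)
  have hunit : IsUnit (C (j ! : R)) := by
    rw [← map_natCast (algebraMap ℚ R)]
    exact ((isUnit_iff_ne_zero.2 (Nat.cast_ne_zero.2 j.factorial_ne_zero)).map _).map _
  rwa [constantCoeff_iterate_derivative, map_mul, Ideal.unit_mul_mem_iff_mem _ hunit] at h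

end

end PowerSeries

/-- If an ideal `I` of `O_n = K[[X_1,...,X_{n-1}]][[X_n]]` is stable under `∂_n`, then all the
coefficients (in `O_{n-1} = K[[X_1,...,X_{n-1}]]`) of any `ξ ∈ I`, as a power series in `X_n`,
lie in `I`. -/
theorem stmt7 (K : Type*) [Field K] [CharZero K] (m : ℕ)
    (I : Ideal (PowerSeries (MvPowerSeries (Fin m) K)))
    (hI : ∀ ξ ∈ I, PowerSeries.derivative (MvPowerSeries (Fin m) K) ξ ∈ I)
    (ξ : PowerSeries (MvPowerSeries (Fin m) K)) (hξ : ξ ∈ I) (j : ℕ) :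
    PowerSeries.C (R := MvPowerSeries (Fin m) K) (PowerSeries.coeff j ξ) ∈ I :=
  PowerSeries.C_coeff_mem_of_derivative_mem hI hξ j
end

section
/- Let A be a Noetherian ring, I an ideal of A, and M an A-module (not necessarily finitely generated). Let Γ_I(M) = { m ∈ M : I^s m = 0 for some s ≥ 0 } be the I-torsion submodule. Then the set of associated primes of M/Γ_I(M) equals { P ∈ Ass_A(M) : P ⊉ I }. -/
/-!
For `x : M` we have `a • x ∈ Γ` iff `a ∈ (ann x : I ^ n)` for some `n`. This ascending chain of
colon ideals stabilises because `A` is Noetherian, so `(Γ : x) = (ann x : I ^ N)` for some `N`.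
Consequently `M ⧸ Γ` has no `I`-torsion, so an associated prime `P = (Γ : x)` of `M ⧸ Γ` does not
contain `I`; for `a ∈ I \ P`, primality gives `P = ann (a ^ N • x)`. Conversely, if `P = ann x`
is prime and `I ⊄ P`, then the annihilator of the class of `x` is `(P : I ^ N) = P`.
-/

open Submodule

namespace Ideal

variable {A : Type*} [CommSemiring A]

theorem exists_colon_pow_le_colon_pow [IsNoetherianRing A] (J I : Ideal A) :
    ∃ N, ∀ n, J.colon (↑(I ^ n) : Set A) ≤ J.colon (↑(I ^ N) : Set A) := by
  let f : ℕ →o Ideal A :=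
    ⟨fun n ↦ J.colon (↑(I ^ n) : Set A), fun _ _ h ↦ colon_mono le_rfl (Ideal.pow_le_pow_right h)⟩
  obtain ⟨N, hN⟩ := monotone_stabilizes_iff_noetherian.mpr inferInstance f
  refine ⟨N, fun n ↦ ?_⟩
  rcases le_total n N with h | h
  · exact f.monotone h
  · exact (hN n h).ge

theorem IsPrime.colon_pow_eq_self {P I : Ideal A} (hP : P.IsPrime) (hIP : ¬ I ≤ P) (n : ℕ) :
    P.colon (↑(I ^ n) : Set A) = P := by
  obtain ⟨a, haI, haP⟩ := SetLike.not_le_iff_exists.mp hIP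
  refine le_antisymm (fun r hr ↦ ?_) (fun r hr ↦ mem_colon.mpr fun s _ ↦ P.mul_mem_right s hr)
  have := mem_colon.mp hr _ (Ideal.pow_mem_pow haI n)
  exact (hP.mem_or_mem this).resolve_right (mt (hP.mem_of_pow_mem n) haP)

end Ideal

section Torsion

variable {A M : Type*} [CommSemiring A] [AddCommMonoid M] [Module A M] {I : Ideal A}
  {Γ : Submodule A M}

theorem mem_colon_singleton_iff_exists_mem_colon_pow
    (hΓ : ∀ x : M, x ∈ Γ ↔ ∃ s : ℕ, ∀ a ∈ I ^ s, a • x = 0) {x : M} {r : A} :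
    r ∈ Γ.colon {x} ↔ ∃ n, r ∈ ((⊥ : Submodule A M).colon {x}).colon (↑(I ^ n) : Set A) := by
  simp only [hΓ, mem_colon, Set.mem_singleton_iff, forall_eq, mem_bot, SetLike.mem_coe,
    smul_eq_mul, mul_smul, smul_comm r]

theorem exists_colon_singleton_eq_colon_pow [IsNoetherianRing A]
    (hΓ : ∀ x : M, x ∈ Γ ↔ ∃ s : ℕ, ∀ a ∈ I ^ s, a • x = 0) (x : M) :
    ∃ N, Γ.colon {x} = ((⊥ : Submodule A M).colon {x}).colon (↑(I ^ N) : Set A) := by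
  obtain ⟨N, hN⟩ := Ideal.exists_colon_pow_le_colon_pow ((⊥ : Submodule A M).colon {x}) I
  refine ⟨N, le_antisymm (fun r hr ↦ ?_) (fun r hr ↦ ?_)⟩
  · obtain ⟨n, hn⟩ := (mem_colon_singleton_iff_exists_mem_colon_pow hΓ).mp hr
    exact hN n hn
  · exact (mem_colon_singleton_iff_exists_mem_colon_pow hΓ).mpr ⟨N, hr⟩

theorem mem_of_le_colon_singleton [IsNoetherianRing A]
    (hΓ : ∀ x : M, x ∈ Γ ↔ ∃ s : ℕ, ∀ a ∈ I ^ s, a • x = 0) {x : M} (h : I ≤ Γ.colon {x}) :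
    x ∈ Γ := by
  obtain ⟨N, hN⟩ := exists_colon_singleton_eq_colon_pow hΓ x
  refine (hΓ x).mpr ⟨N + 1, fun s hs ↦ ?_⟩
  rw [pow_succ'] at hs
  refine mem_bot A |>.mp <| mem_colon_singleton.mp <| Ideal.mul_le.mpr (fun a ha b hb ↦ ?_) hs
  rw [hN] at h
  exact mem_colon.mp (h ha) b hb

theorem isAssociatedPrime_of_eq_colon_singleton [IsNoetherianRing A]
    (hΓ : ∀ x : M, x ∈ Γ ↔ ∃ s : ℕ, ∀ a ∈ I ^ s, a • x = 0) {P : Ideal A} (hP : P.IsPrime)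
    (hIP : ¬ I ≤ P) {x : M} (hx : P = Γ.colon {x}) : IsAssociatedPrime P M := by
  obtain ⟨N, hN⟩ := exists_colon_singleton_eq_colon_pow hΓ x
  obtain ⟨a, haI, haP⟩ := SetLike.not_le_iff_exists.mp hIP
  refine isAssociatedPrime_iff.mpr ⟨hP, a ^ N • x, le_antisymm (fun r hr ↦ ?_) (fun r hr ↦ ?_)⟩
  · rw [hx, hN] at hr
    simpa only [mem_colon_singleton, mem_bot, smul_smul, smul_eq_mul] using
      mem_colon.mp hr _ (Ideal.pow_mem_pow haI N)
  · rw [mem_colon_singleton, mem_bot, smul_smul] at hr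
    have : r * a ^ N ∈ P := by
      rw [hx, mem_colon_singleton, hr]
      exact Γ.zero_mem
    exact (hP.mem_or_mem this).resolve_right (mt (hP.mem_of_pow_mem N) haP)

end Torsion

theorem Submodule.colon_singleton_mkQ {A M : Type*} [CommRing A] [AddCommGroup M] [Module A M]
    (Γ : Submodule A M) (x : M) :
    (⊥ : Submodule A (M ⧸ Γ)).colon {Γ.mkQ x} = Γ.colon {x} := by
  ext r
  rw [mem_colon_singleton, mem_colon_singleton, mem_bot, ← map_smul, mkQ_apply, Quotient.mk_eq_zero]

/-- For a Noetherian ring `A`, an ideal `I` and an arbitrary `A`-module `M`, the associated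
primes of `M/Γ_I(M)` are exactly the associated primes of `M` not containing `I`. -/
theorem stmt9 (A : Type*) [CommRing A] [IsNoetherianRing A] (I : Ideal A)
    (M : Type*) [AddCommGroup M] [Module A M]
    (Γ : Submodule A M)
    (hΓ : ∀ x : M, x ∈ Γ ↔ ∃ s : ℕ, ∀ a ∈ I ^ s, a • x = 0) :
    associatedPrimes A (M ⧸ Γ) = {P | P ∈ associatedPrimes A M ∧ ¬ I ≤ P} := by
  ext P
  simp only [Set.mem_ofPred_eq, AssociatedPrimes.mem_iff, isAssociatedPrime_iff]
  constructor
  · rintro ⟨hP, x', hx'⟩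
    obtain ⟨x, rfl⟩ := mkQ_surjective Γ x'
    rw [colon_singleton_mkQ] at hx'
    have hIP : ¬ I ≤ P := fun h ↦ hP.ne_top <| by
      rw [hx', colon_eq_top_iff_subset, Set.singleton_subset_iff]
      exact mem_of_le_colon_singleton hΓ (hx' ▸ h)
    exact ⟨isAssociatedPrime_iff.mp (isAssociatedPrime_of_eq_colon_singleton hΓ hP hIP hx'), hIP⟩
  · rintro ⟨⟨hP, x, rfl⟩, hIP⟩
    obtain ⟨N, hN⟩ := exists_colon_singleton_eq_colon_pow hΓ x
    exact ⟨hP, Γ.mkQ x, by rw [colon_singleton_mkQ, hN, hP.colon_pow_eq_self hIP]⟩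
end
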